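/- Let G and H be as in the previous construction (H doubles G with edges v_i v'_i, v_i v'_j and v'_i v'_j for adjacent v_i, v_j). Then the independence number of H equals the maximum size of an acyclic matching in H. -/

import Mathlib

/-- `M` is a matching in `G`: a set of edges of `G` that are pairwise vertex-disjoint. -/
def IsMatching {V : Type*} (G : SimpleGraph V) (M : Set (Sym2 V)) : Prop :=
  M ⊆ G.edgeSet ∧ M.Pairwise fun e f => ∀ v, v ∈ e → v ∉ f

/-- The set of `M`-saturated vertices (endpoints of edges of `M`). -/
def mVerts {V : Type*} (M : Set (Sym2 V)) : Set V := {v | ∃ e ∈ M, v ∈ e}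

/-- `M` is a perfect matching of `G`: a matching saturating every vertex. -/
def IsPerfectM {V : Type*} (G : SimpleGraph V) (M : Set (Sym2 V)) : Prop :=
  IsMatching G M ∧ ∀ v, v ∈ mVerts M

/-- `M` is an acyclic matching: the subgraph induced by the endpoints is a forest. -/
def IsAcyclicMatching {V : Type*} (G : SimpleGraph V) (M : Set (Sym2 V)) : Prop :=
  IsMatching G M ∧ (G.induce (mVerts M)).IsAcyclic

/-- `M` is an induced matching: the subgraph induced by the endpoints is exactly `M`. -/
def IsInducedMatching {V : Type*} (G : SimpleGraph V) (M : Set (Sym2 V)) : Prop :=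
  IsMatching G M ∧ ∀ e ∈ G.edgeSet, (∀ v, v ∈ e → v ∈ mVerts M) → e ∈ M

/-- `M` is a uniquely restricted matching: the subgraph induced by the endpoints
has exactly one perfect matching. -/
def IsURMatching {V : Type*} (G : SimpleGraph V) (M : Set (Sym2 V)) : Prop :=
  IsMatching G M ∧
    ∃! N : Set (Sym2 (mVerts M)), IsPerfectM (G.induce (mVerts M)) N

/-- `S` is an independent set in `G`. -/
def IsIndep {V : Type*} (G : SimpleGraph V) (S : Set V) : Prop :=
  S.Pairwise fun u v => ¬ G.Adj u v

/-- The graph `H` on `V × Bool` (original copy `(·, false)`, primed copy `(·, true)`)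
with edges `v_i v_j` (from `G`), `v_i v'_i`, `v_i v'_j` and `v'_i v'_j` for `v_i v_j ∈ E(G)`. -/
def blowup {V : Type*} (G : SimpleGraph V) : SimpleGraph (V × Bool) :=
  SimpleGraph.fromRel fun a b =>
    (a.1 = b.1 ∧ a.2 ≠ b.2) ∨ G.Adj a.1 b.1

/-!
An acyclic matching `M` spans a forest, and a colour class of a 2-colouring of that forest is an
independent set containing exactly one endpoint of each edge of `M`; so in every graph some
independent set is as large as a given acyclic matching. Conversely, an independent set of
`blowup G` meets each pair `{v, v'}` at most once and projects to an independent set `S` of `G`;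
the edges `v v'` for `v ∈ S` then form a matching whose saturated vertices span no other edge, hence
an acyclic matching of the same size.
-/

open SimpleGraph

theorem SimpleGraph.isAcyclic_of_adj_unique {W : Type*} {Γ : SimpleGraph W}
    (h : ∀ ⦃u v w⦄, Γ.Adj u v → Γ.Adj u w → v = w) : Γ.IsAcyclic := by
  rw [isAcyclic_iff_forall_adj_isBridge]
  refine fun x y hxy => isBridge_iff.mpr fun ⟨w⟩ => ?_
  obtain _ | ⟨hxz, _⟩ := w
  · exact hxy.ne rfl
  · rw [deleteEdges_adj] at hxz
    obtain rfl := h hxz.1 hxy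
    exact hxz.2 rfl

section Matching

variable {W : Type*} {Γ : SimpleGraph W} {M : Set (Sym2 W)}

theorem IsMatching.eq_of_mem_of_mem (hM : IsMatching Γ M) {e f : Sym2 W} (he : e ∈ M)
    (hf : f ∈ M) {v : W} (hve : v ∈ e) (hvf : v ∈ f) : e = f := by
  by_contra hne
  exact hM.2 he hf hne v hve hvf

theorem IsMatching.ncard_eq_of_mem_iff_notMem (hM : IsMatching Γ M) {I : Set W}
    (hI : I ⊆ mVerts M) (hIM : ∀ x y, s(x, y) ∈ M → (x ∈ I ↔ y ∉ I)) :
    I.ncard = M.ncard := by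
  choose e he using hI
  refine Set.ncard_congr e (fun v hv => (he hv).1) (fun u v hu hv huv => ?_) (fun f hf => ?_)
  · by_contra hne
    have hev : e hu = s(u, v) := (Sym2.mem_and_mem_iff hne).mp ⟨(he hu).2, huv ▸ (he hv).2⟩
    exact (hIM u v (hev ▸ (he hu).1)).mp hu hv
  · induction f using Sym2.ind with
    | _ x y =>
    by_cases hx : x ∈ I
    · exact ⟨x, hx, hM.eq_of_mem_of_mem (he hx).1 hf (he hx).2 (Sym2.mem_mk_left x y)⟩
    · have hy : y ∈ I := not_not.mp (mt (hIM x y hf).mpr hx)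
      exact ⟨y, hy, hM.eq_of_mem_of_mem (he hy).1 hf (he hy).2 (Sym2.mem_mk_right x y)⟩

theorem IsAcyclicMatching.exists_isIndep_ncard_eq (hM : IsAcyclicMatching Γ M) :
    ∃ I : Set W, IsIndep Γ I ∧ I.ncard = M.ncard := by
  let c := hM.2.coloringTwo
  refine ⟨{v | ∃ h : v ∈ mVerts M, c ⟨v, h⟩ = 0}, ?_, hM.1.ncard_eq_of_mem_iff_notMem ?_ ?_⟩
  · rintro u ⟨hu, hcu⟩ v ⟨hv, hcv⟩ - huv
    exact c.valid (show (Γ.induce (mVerts M)).Adj ⟨u, hu⟩ ⟨v, hv⟩ from huv) (hcu.trans hcv.symm)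
  · exact fun v ⟨hv, _⟩ => hv
  · intro x y hxy
    have hx : x ∈ mVerts M := ⟨_, hxy, Sym2.mem_mk_left x y⟩
    have hy : y ∈ mVerts M := ⟨_, hxy, Sym2.mem_mk_right x y⟩
    have hc := c.valid (show (Γ.induce (mVerts M)).Adj ⟨x, hx⟩ ⟨y, hy⟩ from hM.1.1 hxy)
    simp only [Set.mem_ofPred_eq, hx, hy, exists_true_left]
    omega

end Matching

section Blowup

variable {V : Type*} {G : SimpleGraph V}

theorem blowup_adj {p q : V × Bool} :
    (blowup G).Adj p q ↔ p ≠ q ∧ (p.1 = q.1 ∨ G.Adj p.1 q.1) := by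
  simp only [blowup, fromRel_adj]
  constructor
  · rintro ⟨hne, (⟨h, _⟩ | h) | (⟨h, _⟩ | h)⟩
    exacts [⟨hne, .inl h⟩, ⟨hne, .inr h⟩, ⟨hne, .inl h.symm⟩, ⟨hne, .inr h.symm⟩]
  · rintro ⟨hne, h | h⟩
    · exact ⟨hne, .inl (.inl ⟨h, fun h' => hne (Prod.ext h h')⟩)⟩
    · exact ⟨hne, .inl (.inr h)⟩

def verticalEdges (S : Set V) : Set (Sym2 (V × Bool)) :=
  (fun v => s((v, false), (v, true))) '' S

theorem mem_mVerts_verticalEdges {S : Set V} {x : V × Bool} :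
    x ∈ mVerts (verticalEdges S) ↔ x.1 ∈ S := by
  constructor
  · rintro ⟨_, ⟨v, hv, rfl⟩, hx⟩
    rcases Sym2.mem_iff.mp hx with rfl | rfl <;> exact hv
  · intro hx
    obtain ⟨v, _ | _⟩ := x <;> exact ⟨_, ⟨v, hx, rfl⟩, by simp⟩

theorem ncard_verticalEdges (S : Set V) : (verticalEdges S).ncard = S.ncard :=
  Set.InjOn.ncard_image fun u _ v _ huv => by simpa using huv

theorem isMatching_verticalEdges (G : SimpleGraph V) (S : Set V) :
    IsMatching (blowup G) (verticalEdges S) := by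
  refine ⟨?_, ?_⟩
  · rintro _ ⟨v, -, rfl⟩
    simp [blowup_adj]
  · rintro _ ⟨u, -, rfl⟩ _ ⟨v, -, rfl⟩ hne x hxu hxv
    simp only [Sym2.mem_iff] at hxu hxv
    obtain rfl : u = v := by rcases hxu with rfl | rfl <;> rcases hxv with h | h <;> simp_all
    exact hne rfl

theorem IsIndep.isAcyclicMatching_verticalEdges {S : Set V} (hS : IsIndep G S) :
    IsAcyclicMatching (blowup G) (verticalEdges S) := by
  refine ⟨isMatching_verticalEdges G S, isAcyclic_of_adj_unique ?_⟩
  have partner : ∀ {x y : mVerts (verticalEdges S)},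
      ((blowup G).induce _).Adj x y → (y : V × Bool) = ((x : V × Bool).1, !(x : V × Bool).2) := by
    rintro ⟨⟨a, b⟩, hx⟩ ⟨⟨c, d⟩, hy⟩ hxy
    obtain ⟨hne, rfl | hadj⟩ := blowup_adj.mp hxy
    · cases b <;> cases d <;> simp_all
    · exact absurd hadj (hS (mem_mVerts_verticalEdges.mp hx) (mem_mVerts_verticalEdges.mp hy)
        hadj.ne)
  exact fun _ _ _ hv hw => Subtype.ext ((partner hv).trans (partner hw).symm)

theorem IsIndep.exists_isAcyclicMatching_blowup {I : Set (V × Bool)}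
    (hI : IsIndep (blowup G) I) :
    ∃ M, IsAcyclicMatching (blowup G) M ∧ M.ncard = I.ncard := by
  have hinj : Set.InjOn Prod.fst I := fun p hp q hq h => by
    by_contra hne
    exact hI hp hq hne (blowup_adj.mpr ⟨hne, .inl h⟩)
  have hindep : IsIndep G (Prod.fst '' I) := by
    rintro _ ⟨p, hp, rfl⟩ _ ⟨q, hq, rfl⟩ - hadj
    have hne : p ≠ q := fun h => hadj.ne (congrArg Prod.fst h)
    exact hI hp hq hne (blowup_adj.mpr ⟨hne, .inr hadj⟩)
  exact ⟨_, hindep.isAcyclicMatching_verticalEdges, by rw [ncard_verticalEdges, hinj.ncard_image]⟩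

end Blowup

theorem stmt16_general {V : Type*} (G : SimpleGraph V) :
    sSup {n : ℕ | ∃ I : Set (V × Bool), IsIndep (blowup G) I ∧ I.ncard = n} =
    sSup {n : ℕ | ∃ M : Set (Sym2 (V × Bool)),
      IsAcyclicMatching (blowup G) M ∧ M.ncard = n} := by
  congr 1
  ext n
  constructor
  · rintro ⟨I, hI, rfl⟩
    exact hI.exists_isAcyclicMatching_blowup
  · rintro ⟨M, hM, rfl⟩
    exact hM.exists_isIndep_ncard_eq

theorem stmt16 {V : Type*} [Fintype V] (G : SimpleGraph V) :
    sSup {n : ℕ | ∃ I : Set (V × Bool), IsIndep (blowup G) I ∧ I.ncard = n} =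
    sSup {n : ℕ | ∃ M : Set (Sym2 (V × Bool)),
      IsAcyclicMatching (blowup G) M ∧ M.ncard = n} :=
  stmt16_general G
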